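/- Let (a_k)_{k=0}^{N} and (b_k)_{k=1}^{N} be nonnegative reals, τ > 0, h > 0 with M := h/τ ∈ ℕ, M ≤ N. Suppose a_k = a₀ for k ≤ 0 extended by convention, and define Π_l := ⟨δ_l − δ_{l−M}, δ_l⟩ for a sequence (δ_l) in a real inner product space V with δ_m = v₀ fixed for m ∈ {−M+1, …, 0}. Then Σ_{l=1}^{k} 2τ Π_l = Σ_{l=1}^{k} τ ‖δ_l − δ_{l−M}‖² + Σ_{l=k−M+1}^{k} τ ‖δ_l‖² − h ‖v₀‖² for every k with M ≤ k ≤ N. -/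

import Mathlib

/-! The polarization identity `2⟪x - y, x⟫ = ‖x - y‖² + (‖x‖² - ‖y‖²)` splits each summand into
`‖δ_l - δ_{l-M}‖²` and the difference `‖δ_l‖² - ‖δ_{l-M}‖²`. Summed over `l`, these differences
telescope with step `M` to the last `M` values of `‖δ_l‖²` minus the `M` initial values `‖v₀‖²`. -/

open Finset

theorem real_two_mul_inner_sub_self_left {V : Type*} [NormedAddCommGroup V]
    [InnerProductSpace ℝ V] (x y : V) :
    2 * inner ℝ (x - y) x = ‖x - y‖ ^ 2 + (‖x‖ ^ 2 - ‖y‖ ^ 2) := by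
  rw [norm_sub_sq_real, inner_sub_left, real_inner_self_eq_norm_sq, real_inner_comm]
  ring

theorem Finset.sum_Ioc_add_sum_Ioc {α A : Type*} [LinearOrder α] [LocallyFiniteOrder α]
    [AddCommMonoid A] (f : α → A) {a b c : α} (hab : a ≤ b) (hbc : b ≤ c) :
    ∑ l ∈ Ioc a b, f l + ∑ l ∈ Ioc b c, f l = ∑ l ∈ Ioc a c, f l := by
  rw [← sum_union (Ioc_disjoint_Ioc_of_le le_rfl), Ioc_union_Ioc_eq_Ioc hab hbc]

theorem Int.sum_Ioc_sub_shift {A : Type*} [AddCommGroup A] (f : ℤ → A) {M k : ℤ}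
    (hM : 0 ≤ M) (hk : 0 ≤ k) :
    ∑ l ∈ Ioc 0 k, (f l - f (l - M)) = ∑ l ∈ Ioc (k - M) k, f l - ∑ l ∈ Ioc (-M) 0, f l := by
  have hshift : ∑ l ∈ Ioc 0 k, f (l - M) = ∑ l ∈ Ioc (-M) (k - M), f l := by
    have hmap := map_add_right_Ioc (-M) (k - M) M
    rw [neg_add_cancel, sub_add_cancel] at hmap
    rw [← hmap, sum_map]
    simp
  have hsplit_zero := sum_Ioc_add_sum_Ioc f (by omega : -M ≤ 0) hk
  have hsplit_shift := sum_Ioc_add_sum_Ioc f (by omega : -M ≤ k - M) (by omega : k - M ≤ k)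
  rw [sum_sub_distrib, hshift, sub_eq_sub_iff_add_eq_add, add_comm, hsplit_zero, ← hsplit_shift,
    add_comm]

theorem stmt13_general {V : Type*} [NormedAddCommGroup V] [InnerProductSpace ℝ V]
    (τ h : ℝ) (M : ℤ) (hM : 1 ≤ M) (hh : h = M * τ)
    (δ : ℤ → V) (v₀ : V) (hδ : ∀ m : ℤ, 1 - M ≤ m → m ≤ 0 → δ m = v₀)
    (k : ℤ) (hk : M ≤ k) :
    ∑ l ∈ Finset.Icc 1 k, 2 * τ * (inner ℝ (δ l - δ (l - M)) (δ l) : ℝ) =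
      (∑ l ∈ Finset.Icc 1 k, τ * ‖δ l - δ (l - M)‖^2) +
        (∑ l ∈ Finset.Icc (k - M + 1) k, τ * ‖δ l‖^2) - h * ‖v₀‖^2 := by
  have hinitial : ∑ l ∈ Ioc (-M) 0, ‖δ l‖ ^ 2 = M * ‖v₀‖ ^ 2 := by
    have hconst : ∀ l ∈ Ioc (-M) 0, ‖δ l‖ ^ 2 = ‖v₀‖ ^ 2 := fun l hl => by
      obtain ⟨hlo, hhi⟩ := mem_Ioc.1 hl
      rw [hδ l (by omega) hhi]
    rw [sum_congr rfl hconst, sum_const, nsmul_eq_mul, Int.card_Ioc, sub_neg_eq_add, zero_add,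
      ← Int.cast_natCast, Int.toNat_of_nonneg (by omega)]
  have htelescope :=
    Int.sum_Ioc_sub_shift (fun l => ‖δ l‖ ^ 2) (by omega : 0 ≤ M) (by omega : 0 ≤ k)
  have hsum : 2 * ∑ l ∈ Ioc 0 k, inner ℝ (δ l - δ (l - M)) (δ l) =
      ∑ l ∈ Ioc 0 k, ‖δ l - δ (l - M)‖ ^ 2 + (∑ l ∈ Ioc (k - M) k, ‖δ l‖ ^ 2 - M * ‖v₀‖ ^ 2) := by
    rw [← hinitial, ← htelescope, ← sum_add_distrib, mul_sum]
    exact sum_congr rfl fun l _ => real_two_mul_inner_sub_self_left _ _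
  have hIcc : Icc (1 : ℤ) k = Ioc 0 k := by
    rw [← Icc_add_one_left_eq_Ioc, zero_add]
  rw [hIcc, Icc_add_one_left_eq_Ioc, hh, ← mul_sum, ← mul_sum, ← mul_sum]
  linear_combination τ * hsum

theorem stmt13 {V : Type*} [NormedAddCommGroup V] [InnerProductSpace ℝ V]
    (τ h : ℝ) (hτ : 0 < τ) (M : ℤ) (hM : 1 ≤ M) (hh : h = M * τ)
    (δ : ℤ → V) (v₀ : V) (hδ : ∀ m : ℤ, 1 - M ≤ m → m ≤ 0 → δ m = v₀)
    (k : ℤ) (hk : M ≤ k) :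
    ∑ l ∈ Finset.Icc 1 k, 2 * τ * (inner ℝ (δ l - δ (l - M)) (δ l) : ℝ) =
      (∑ l ∈ Finset.Icc 1 k, τ * ‖δ l - δ (l - M)‖^2) +
        (∑ l ∈ Finset.Icc (k - M + 1) k, τ * ‖δ l‖^2) - h * ‖v₀‖^2 :=
  stmt13_general τ h M hM hh δ v₀ hδ k hk
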